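/- Suppose β ∈ ℝ^p is s-sparse with support I, let B = β ⊗ β, and let w_β = β/‖β‖₂ + s^{-1/2}·sign(β). Then the matrix W_β = w_β ⊗ w_β is a subgradient of the mixed atomic norm at B; i.e., ⟨W_β β, β⟩ = θ_s(β, β) and ⟨W_β u, v⟩ ≤ θ_s(u, v) for all u, v ∈ ℝ^p, hence W_β ∈ ∂‖B‖_{Γ_s}. -/

import Mathlib

open MeasureTheory ProbabilityTheory Finset

noncomputable section

/-- Vectors in ℝ^p. -/
abbrev Vec (p : ℕ) := Fin p → ℝ

/-- p × p real matrices. -/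
abbrev Mat (p : ℕ) := Matrix (Fin p) (Fin p) ℝ

/-- Euclidean (ℓ2) norm. -/
def l2 {p : ℕ} (u : Vec p) : ℝ := Real.sqrt (∑ i, (u i) ^ 2)

/-- ℓ1 norm. -/
def l1 {p : ℕ} (u : Vec p) : ℝ := ∑ i, |u i|

/-- Euclidean inner product. -/
def dotp {p : ℕ} (u v : Vec p) : ℝ := ∑ i, u i * v i

/-- θ_s(u,v) = (‖u‖₂ + s^{-1/2}‖u‖₁)(‖v‖₂ + s^{-1/2}‖v‖₁). -/
def theta {p : ℕ} (s : ℝ) (u v : Vec p) : ℝ :=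
  (l2 u + (Real.sqrt s)⁻¹ * l1 u) * (l2 v + (Real.sqrt s)⁻¹ * l1 v)

/-- Frobenius (Hilbert–Schmidt) inner product. -/
def frob {p : ℕ} (A B : Mat p) : ℝ := ∑ i, ∑ j, A i j * B i j

/-- Frobenius norm. -/
def frobNorm {p : ℕ} (A : Mat p) : ℝ := Real.sqrt (frob A A)

/-- The mixed atomic norm ‖B‖_{Γ_s}. -/
def mixedNorm {p : ℕ} (s : ℝ) (B : Mat p) : ℝ :=
  sInf { t | ∃ (K : ℕ) (u v : Fin K → Vec p),
    B = ∑ k, Matrix.vecMulVec (u k) (v k) ∧ t = ∑ k, theta s (u k) (v k) }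

/-- Dual norm of the mixed atomic norm. -/
def dualMixedNorm {p : ℕ} (s : ℝ) (Z : Mat p) : ℝ :=
  sSup { t | ∃ B : Mat p, mixedNorm s B ≤ 1 ∧ t = frob Z B }

/-- A vector is `s`-sparse if it has at most `s` nonzero entries. -/
def IsSparse {p : ℕ} (s : ℕ) (u : Vec p) : Prop := {i | u i ≠ 0}.ncard ≤ s

/-- Nuclear norm of a real matrix: the sum of its singular values. -/
def nuclearNorm {p : ℕ} (A : Mat p) : ℝ :=
  ∑ i, Real.sqrt ((show (Matrix.transpose A * A).IsHermitian by
    simpa [Matrix.conjTranspose_eq_transpose_of_trivial] using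
      Matrix.isHermitian_conjTranspose_mul_self A).eigenvalues i)

/-- Operator (spectral) norm of a real matrix. -/
def opNorm {p : ℕ} (A : Mat p) : ℝ :=
  sSup { t | ∃ u v : Vec p, l2 u ≤ 1 ∧ l2 v ≤ 1 ∧ t = dotp (A.mulVec u) v }

/-- `X` has sub-Gaussian (ψ₂) norm at most `K`: `E exp(X²/K²) ≤ 2`. -/
def HasSubgaussianNorm {Ω : Type*} [MeasurableSpace Ω] (μ : Measure Ω) (X : Ω → ℝ) (K : ℝ) :
    Prop := ∫ ω, Real.exp ((X ω) ^ 2 / K ^ 2) ∂μ ≤ 2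

/-- `W` is a subgradient of the mixed atomic norm `‖·‖_{Γ_s}` at `B`. -/
def InSubdiff {p : ℕ} (s : ℝ) (W B : Mat p) : Prop :=
  ∀ C : Mat p, mixedNorm s B + frob W (C - B) ≤ mixedNorm s C

/-! For `w = w_β` the bilinear form of `w ⊗ w` factors as `⟨w, u⟩⟨w, v⟩`. Since
`|w_i| ≤ |β_i| / ‖β‖₂ + s^{-1/2}`, Cauchy–Schwarz gives `|⟨w, u⟩| ≤ ‖u‖₂ + s^{-1/2}‖u‖₁`, with
equality at `u = β`. So `⟨w ⊗ w, ·⟩` is at most `θ_s` on every rank-one atom, hence at most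
`‖·‖_{Γ_s}` everywhere, while at `β ⊗ β` it equals `θ_s(β, β) ≥ ‖β ⊗ β‖_{Γ_s}`. -/

open Matrix

lemma Real.sign_mul_self (x : ℝ) : Real.sign x * x = |x| := by
  rcases lt_trichotomy x 0 with hx | rfl | hx
  · rw [Real.sign_of_neg hx, abs_of_neg hx, neg_one_mul]
  · simp
  · rw [Real.sign_of_pos hx, abs_of_pos hx, one_mul]

lemma Real.abs_sign_le_one (x : ℝ) : |Real.sign x| ≤ 1 := by
  rcases Real.sign_apply_eq x with h | h | h <;> simp [h]

section Vectors

variable {p : ℕ}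

lemma l2_nonneg (u : Vec p) : 0 ≤ l2 u := Real.sqrt_nonneg _

lemma l1_nonneg (u : Vec p) : 0 ≤ l1 u := sum_nonneg fun i _ => abs_nonneg (u i)

lemma l2_mul_self (u : Vec p) : l2 u * l2 u = ∑ i, u i ^ 2 :=
  Real.mul_self_sqrt (sum_nonneg fun i _ => sq_nonneg (u i))

lemma sum_abs_mul_abs_le_l2_mul_l2 (u v : Vec p) : ∑ i, |u i| * |v i| ≤ l2 u * l2 v := by
  simpa only [sq_abs, l2] using Real.sum_mul_le_sqrt_mul_sqrt univ (fun i => |u i|) (fun i => |v i|)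

def mixedVecNorm (s : ℝ) (u : Vec p) : ℝ := l2 u + (Real.sqrt s)⁻¹ * l1 u

lemma mixedVecNorm_nonneg (s : ℝ) (u : Vec p) : 0 ≤ mixedVecNorm s u :=
  add_nonneg (l2_nonneg u) (mul_nonneg (inv_nonneg.2 (Real.sqrt_nonneg s)) (l1_nonneg u))

lemma theta_eq_mul_mixedVecNorm (s : ℝ) (u v : Vec p) :
    theta s u v = mixedVecNorm s u * mixedVecNorm s v := rfl

lemma theta_nonneg (s : ℝ) (u v : Vec p) : 0 ≤ theta s u v :=
  mul_nonneg (mixedVecNorm_nonneg s u) (mixedVecNorm_nonneg s v)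

lemma theta_comm (s : ℝ) (u v : Vec p) : theta s u v = theta s v u := mul_comm _ _

def wbeta (s : ℝ) (β : Vec p) : Vec p := fun i => β i / l2 β + (Real.sqrt s)⁻¹ * Real.sign (β i)

lemma dotp_wbeta_self (s : ℝ) (β : Vec p) : dotp (wbeta s β) β = mixedVecNorm s β := by
  have hterm : ∀ i, wbeta s β i * β i = β i ^ 2 / l2 β + (Real.sqrt s)⁻¹ * |β i| := fun i => by
    rw [wbeta, ← Real.sign_mul_self]; ring
  rw [dotp, sum_congr rfl fun i _ => hterm i, sum_add_distrib, ← sum_div, ← mul_sum,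
    ← l2_mul_self, mul_self_div_self, mixedVecNorm, l1]

lemma abs_wbeta_le (s : ℝ) (β : Vec p) (i : Fin p) :
    |wbeta s β i| ≤ |β i| / l2 β + (Real.sqrt s)⁻¹ :=
  calc |wbeta s β i| ≤ |β i / l2 β| + |(Real.sqrt s)⁻¹ * Real.sign (β i)| := abs_add_le _ _
    _ ≤ |β i| / l2 β + (Real.sqrt s)⁻¹ := by
      rw [abs_div, abs_of_nonneg (l2_nonneg β), abs_mul,
        abs_of_nonneg (inv_nonneg.2 (Real.sqrt_nonneg s))]
      gcongr
      exact mul_le_of_le_one_right (inv_nonneg.2 (Real.sqrt_nonneg s)) (Real.abs_sign_le_one _)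

lemma abs_dotp_wbeta_le (s : ℝ) (β u : Vec p) : |dotp (wbeta s β) u| ≤ mixedVecNorm s u :=
  calc |dotp (wbeta s β) u| ≤ ∑ i, |wbeta s β i| * |u i| := by
        simpa only [dotp, abs_mul] using abs_sum_le_sum_abs (fun i => wbeta s β i * u i) univ
    _ ≤ ∑ i, (|β i| * |u i| / l2 β + (Real.sqrt s)⁻¹ * |u i|) :=
        sum_le_sum fun i _ =>
          (mul_le_mul_of_nonneg_right (abs_wbeta_le s β i) (abs_nonneg (u i))).trans_eq (by ring)
    _ ≤ mixedVecNorm s u := by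
      rw [sum_add_distrib, ← sum_div, ← mul_sum, mixedVecNorm, l1]
      gcongr
      exact div_le_of_le_mul₀ (l2_nonneg β) (l2_nonneg u)
        ((sum_abs_mul_abs_le_l2_mul_l2 β u).trans_eq (mul_comm _ _))

lemma dotp_vecMulVec_self_mulVec (w u v : Vec p) :
    dotp (vecMulVec w w *ᵥ u) v = dotp w u * dotp w v := by
  change (vecMulVec w w *ᵥ u) ⬝ᵥ v = (w ⬝ᵥ u) * (w ⬝ᵥ v)
  rw [vecMulVec_mulVec, op_smul_eq_smul, smul_dotProduct, smul_eq_mul]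

lemma dotp_mul_dotp_le_theta {s : ℝ} {w : Vec p} (hw : ∀ u, |dotp w u| ≤ mixedVecNorm s u)
    (u v : Vec p) : dotp w u * dotp w v ≤ theta s u v :=
  calc dotp w u * dotp w v ≤ |dotp w u| * |dotp w v| := (le_abs_self _).trans_eq (abs_mul _ _)
    _ ≤ theta s u v := mul_le_mul (hw u) (hw v) (abs_nonneg _) (mixedVecNorm_nonneg s u)

end Vectors

section MixedNorm

variable {p : ℕ}

lemma frob_vecMulVec (W : Mat p) (u v : Vec p) : frob W (vecMulVec u v) = dotp (W *ᵥ v) u := by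
  simp only [frob, dotp, vecMulVec_apply, mulVec, dotProduct, sum_mul]
  exact sum_congr rfl fun i _ => sum_congr rfl fun j _ => by ring

lemma frob_sum {K : ℕ} (W : Mat p) (M : Fin K → Mat p) :
    frob W (∑ k, M k) = ∑ k, frob W (M k) := by
  simp only [frob, Matrix.sum_apply, mul_sum]
  exact (sum_congr rfl fun i _ => sum_comm).trans sum_comm

lemma frob_sub (W A B : Mat p) : frob W (A - B) = frob W A - frob W B := by
  simp only [frob, Matrix.sub_apply, mul_sub, sum_sub_distrib]

lemma sum_vecMulVec_single_row (C : Mat p) : ∑ k, vecMulVec (Pi.single k 1) (C k) = C := by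
  ext i j
  simp [Matrix.sum_apply, vecMulVec_apply, Pi.single_apply]

variable {s : ℝ} {W : Mat p}

lemma frob_le_mixedNorm (hW : ∀ u v, dotp (W *ᵥ u) v ≤ theta s u v) (C : Mat p) :
    frob W C ≤ mixedNorm s C := by
  refine le_csInf ⟨_, p, fun k => Pi.single k 1, fun k => C k,
    (sum_vecMulVec_single_row C).symm, rfl⟩ ?_
  rintro t ⟨K, u, v, rfl, rfl⟩
  rw [frob_sum]
  refine sum_le_sum fun k _ => ?_
  rw [frob_vecMulVec, theta_comm]
  exact hW (v k) (u k)

lemma mixedNorm_vecMulVec_le (u v : Vec p) : mixedNorm s (vecMulVec u v) ≤ theta s u v := by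
  refine csInf_le ⟨0, ?_⟩ ⟨1, ![u], ![v], by simp, by simp⟩
  rintro t ⟨K, u, v, -, rfl⟩
  exact sum_nonneg fun k _ => theta_nonneg s (u k) (v k)

lemma inSubdiff_vecMulVec_self {β : Vec p} (hβ : dotp (W *ᵥ β) β = theta s β β)
    (hW : ∀ u v, dotp (W *ᵥ u) v ≤ theta s u v) : InSubdiff s W (vecMulVec β β) := by
  intro C
  rw [frob_sub, frob_vecMulVec, hβ]
  linarith [frob_le_mixedNorm hW C, mixedNorm_vecMulVec_le (s := s) β β]

end MixedNorm

theorem wbeta_outer_is_subgradient_general {p s : ℕ} (β : Vec p) :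
    let w : Vec p := fun i => β i / l2 β + (Real.sqrt (s : ℝ))⁻¹ * Real.sign (β i)
    let W : Mat p := Matrix.vecMulVec w w
    dotp (W.mulVec β) β = theta (s : ℝ) β β ∧
    (∀ u v : Vec p, dotp (W.mulVec u) v ≤ theta (s : ℝ) u v) ∧
    InSubdiff (s : ℝ) W (Matrix.vecMulVec β β) := by
  intro w W
  have hW : ∀ u v, dotp (W *ᵥ u) v = dotp (wbeta s β) u * dotp (wbeta s β) v :=
    dotp_vecMulVec_self_mulVec (wbeta s β)
  have hβ : dotp (W *ᵥ β) β = theta s β β := by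
    rw [hW, dotp_wbeta_self, theta_eq_mul_mixedVecNorm]
  have hle : ∀ u v, dotp (W *ᵥ u) v ≤ theta s u v := fun u v =>
    (hW u v).trans_le (dotp_mul_dotp_le_theta (abs_dotp_wbeta_le s β) u v)
  exact ⟨hβ, hle, inSubdiff_vecMulVec_self hβ hle⟩

/-- `w_β ⊗ w_β` is a subgradient of the mixed atomic norm at `β ⊗ β`. -/
theorem wbeta_outer_is_subgradient {p s : ℕ} (hs : 0 < s) (β : Vec p)
    (hβ : IsSparse s β) (hβ0 : β ≠ 0) :
    let w : Vec p := fun i => β i / l2 β + (Real.sqrt (s : ℝ))⁻¹ * Real.sign (β i)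
    let W : Mat p := Matrix.vecMulVec w w
    dotp (W.mulVec β) β = theta (s : ℝ) β β ∧
    (∀ u v : Vec p, dotp (W.mulVec u) v ≤ theta (s : ℝ) u v) ∧
    InSubdiff (s : ℝ) W (Matrix.vecMulVec β β) :=
  wbeta_outer_is_subgradient_general β
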